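/- Suppose Ω = {ω₁,…,ω_m} is a finite set, Σ is the power set of Ω, and P₀({ωᵢ}) > 0 for every i. Let ℛ be a coherent risk measure on L² with risk envelope 𝒬. Then ℛ is averse if and only if 1 is a relative interior point of 𝒬 relative to 𝒫, i.e. if and only if there exists δ > 0 such that every Q ∈ 𝒫 with ‖Q − 1‖₂ < δ belongs to 𝒬. -/

import Mathlib

open MeasureTheory Filter Topology

noncomputable section

variable {Ω : Type*} [MeasurableSpace Ω] (μ : Measure Ω) [IsProbabilityMeasure μ]

/-- The space `L²(Ω, Σ, P₀; ℝ)`. -/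
abbrev L2 := Lp ℝ 2 μ

/-- Expectation of an `L²` random variable. -/
def expect (X : L2 μ) : ℝ := ∫ ω, X ω ∂μ

/-- `E[X Q]`. -/
def pairing (X Q : L2 μ) : ℝ := ∫ ω, X ω * Q ω ∂μ

/-- The set of densities `𝒫 = {Q ∈ L² : Q ≥ 0 a.s., E[Q] = 1}`. -/
def densities : Set (L2 μ) := {Q | (0 : Ω → ℝ) ≤ᵐ[μ] ⇑Q ∧ ∫ ω, Q ω ∂μ = 1}

/-- The constant random variable as an element of `L²`. -/
def constL2 (c : ℝ) : L2 μ := (memLp_const c).toLp (fun _ => c)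

/-- A coherent risk measure (values in `(-∞, +∞]`, i.e. never `⊥`), axioms (A1)–(A5). -/
structure IsCoherent (ℛ : L2 μ → EReal) : Prop where
  nonbot : ∀ X : L2 μ, ℛ X ≠ ⊥
  const : ∀ C : ℝ, ℛ (constL2 μ C) = (C : EReal)
  convex : ∀ X X' : L2 μ, ∀ l : ℝ, 0 ≤ l → l ≤ 1 →
    ℛ ((1 - l) • X + l • X') ≤ ((1 - l : ℝ) : EReal) * ℛ X + (l : EReal) * ℛ X'
  mono : ∀ X X' : L2 μ, (⇑X ≤ᵐ[μ] ⇑X') → ℛ X ≤ ℛ X'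
  closed : ∀ (Xk : ℕ → L2 μ) (X : L2 μ),
    Tendsto (fun k => ‖Xk k - X‖) atTop (𝓝 0) → (∀ k, ℛ (Xk k) ≤ 0) → ℛ X ≤ 0
  posHom : ∀ (X : L2 μ) (l : ℝ), 0 < l → ℛ (l • X) = (l : EReal) * ℛ X

/-- A risk envelope: a nonempty closed convex subset of `𝒫`. -/
def IsRiskEnvelope (𝒬 : Set (L2 μ)) : Prop :=
  𝒬.Nonempty ∧ IsClosed 𝒬 ∧ Convex ℝ 𝒬 ∧ 𝒬 ⊆ densities μ

/-- `ℛ` has risk envelope `𝒬`: `ℛ(X) = sup_{Q ∈ 𝒬} E[XQ]`. -/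
def HasEnvelope (ℛ : L2 μ → EReal) (𝒬 : Set (L2 μ)) : Prop :=
  ∀ X : L2 μ, ℛ X = ⨆ Q ∈ 𝒬, ((pairing μ X Q : ℝ) : EReal)

/-- Inf-convolution of finitely many functionals. -/
def infConv {n : ℕ} (ℛ : Fin n → L2 μ → EReal) (X : L2 μ) : EReal :=
  ⨅ (Y : Fin n → L2 μ) (_ : ∑ i, Y i = X), ∑ i, ℛ i (Y i)

/-- The lower semicontinuous hull (largest lsc minorant) of an `EReal`-valued function. -/
def lscHull {α : Type*} [TopologicalSpace α] (f : α → EReal) (x : α) : EReal :=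
  ⨆ g ∈ {g : α → EReal | LowerSemicontinuous g ∧ ∀ y, g y ≤ f y}, g x


/-!
On a finite space with positive atoms, `L²` is finite-dimensional and `E[X] = ⟪X, 1⟫`, and
every point of `𝒬` lies in the hyperplane `⟪·, 1⟫ = 1`.

If `𝒬` contains all densities near `1`, then for non-constant `X` and `Y = X - E[X]` the density
`1 + t Y` lies in `𝒬` for small `t > 0`, and `E[X (1 + t Y)] = E[X] + t ‖Y‖² > E[X]`.

Conversely, aversion says that the lower semicontinuous `ℛ` is positive on the compact set of unit
vectors orthogonal to `1`, so it is bounded below there by some `δ > 0`. A density `Q ∉ 𝒬` with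
`‖Q - 1‖ < δ` is separated from `𝒬` by such a unit vector `Z`, and then
`ℛ(Z) ≤ ⟪Z, Q⟫ = ⟪Z, Q - 1⟫ ≤ ‖Q - 1‖ < δ`.
-/

open scoped RealInnerProductSpace

variable {μ}

lemma pairing_eq_inner {Ω : Type*} [MeasurableSpace Ω] {μ : Measure Ω} (X Q : L2 μ) :
    pairing μ X Q = ⟪X, Q⟫ := by
  simp [pairing, L2.inner_def, mul_comm]

lemma coeFn_constL2 (c : ℝ) : ⇑(constL2 μ c) =ᵐ[μ] fun _ => c :=
  (memLp_const c).coeFn_toLp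

lemma inner_constL2_one (X : L2 μ) : ⟪X, constL2 μ 1⟫ = ∫ ω, X ω ∂μ := by
  rw [L2.inner_def]
  refine integral_congr_ae ?_
  filter_upwards [coeFn_constL2 (μ := μ) 1] with ω hω
  simp [hω]

lemma inner_constL2_one_self : ⟪constL2 μ 1, constL2 μ 1⟫ = 1 := by
  rw [inner_constL2_one, integral_congr_ae (coeFn_constL2 1)]
  simp

lemma norm_constL2_one : ‖constL2 μ 1‖ = 1 := by
  rw [norm_eq_sqrt_real_inner, inner_constL2_one_self, Real.sqrt_one]

lemma mem_densities_iff {Q : L2 μ} :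
    Q ∈ densities μ ↔ (0 : Ω → ℝ) ≤ᵐ[μ] ⇑Q ∧ ⟪Q, constL2 μ 1⟫ = 1 := by
  rw [inner_constL2_one]
  rfl

lemma exists_ae_eq_const_iff (X : L2 μ) :
    (∃ c : ℝ, ⇑X =ᵐ[μ] fun _ => c) ↔ X = (∫ ω, X ω ∂μ) • constL2 μ 1 := by
  constructor
  · rintro ⟨c, hc⟩
    rw [show ∫ ω, X ω ∂μ = c by simp [integral_congr_ae hc]]
    refine Lp.ext ?_
    filter_upwards [hc, Lp.coeFn_smul c (constL2 μ 1), coeFn_constL2 (μ := μ) 1]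
      with ω h₁ h₂ h₃
    simp [h₁, h₂, h₃]
  · generalize ∫ ω, X ω ∂μ = c
    rintro rfl
    refine ⟨c, ?_⟩
    filter_upwards [Lp.coeFn_smul c (constL2 μ 1), coeFn_constL2 (μ := μ) 1] with ω h₂ h₃
    simp [h₂, h₃]

lemma finiteDimensional_L2 {Ω : Type*} [MeasurableSpace Ω] [Finite Ω] {μ : Measure Ω}
    (hatoms : ∀ ω : Ω, 0 < μ {ω}) : FiniteDimensional ℝ (L2 μ) := by
  have coe_eq {f g : Ω → ℝ} (h : f =ᵐ[μ] g) : f = g :=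
    funext fun ω => ae_iff_of_countable.1 h ω (hatoms ω).ne'
  let toFun : L2 μ →ₗ[ℝ] (Ω → ℝ) :=
    { toFun := fun X => ⇑X
      map_add' := fun X Y => coe_eq (Lp.coeFn_add X Y)
      map_smul' := fun c X => coe_eq (Lp.coeFn_smul c X) }
  exact .of_injective toFun fun X Y h => Lp.ext (.of_eq h)

lemma eventually_constL2_one_add_smul_mem_densities [Finite Ω] {Y : L2 μ}
    (hY : ⟪Y, constL2 μ 1⟫ = 0) :
    ∀ᶠ t in 𝓝 (0 : ℝ), constL2 μ 1 + t • Y ∈ densities μ := by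
  have hpos : ∀ᶠ t in 𝓝 (0 : ℝ), ∀ ω, 0 < 1 + t * Y ω := by
    refine eventually_all.2 fun ω => Tendsto.eventually_const_lt one_pos ?_
    have : Continuous fun t : ℝ => 1 + t * Y ω := by fun_prop
    exact this.tendsto' 0 1 (by simp)
  filter_upwards [hpos] with t ht
  refine mem_densities_iff.2 ⟨?_, ?_⟩
  · filter_upwards [Lp.coeFn_add (constL2 μ 1) (t • Y), Lp.coeFn_smul t Y,
      coeFn_constL2 (μ := μ) 1] with ω h₁ h₂ h₃
    rw [Pi.zero_apply, h₁, Pi.add_apply, h₂, Pi.smul_apply, h₃, smul_eq_mul]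
    exact (ht ω).le
  · rw [inner_add_left, real_inner_smul_left, hY, inner_constL2_one_self]
    ring

theorem exists_unit_orthogonal_separating {E : Type*} [NormedAddCommGroup E]
    [InnerProductSpace ℝ E] [CompleteSpace E] {C : Set E} (hCne : C.Nonempty)
    (hCconv : Convex ℝ C) (hCclosed : IsClosed C) {e q : E} (he : ‖e‖ = 1)
    (hCe : ∀ x ∈ C, ⟪x, e⟫ = ⟪q, e⟫) (hq : q ∉ C) :
    ∃ z : E, ‖z‖ = 1 ∧ ⟪z, e⟫ = 0 ∧ ∀ x ∈ C, ⟪z, x⟫ < ⟪z, q⟫ := by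
  obtain ⟨f, u, hfC, hfq⟩ := geometric_hahn_banach_closed_point hCconv hCclosed hq
  set y := (InnerProductSpace.toDual ℝ E).symm f
  have hy (x : E) : ⟪y, x⟫ = f x := InnerProductSpace.toDual_symm_apply
  -- Projecting `y` onto `eᗮ` keeps it separating, since `C` and `q` lie in one hyperplane `⟪·, e⟫ = c`.
  set w := y - ⟪y, e⟫ • e
  have hwe : ⟪w, e⟫ = 0 := by
    rw [inner_sub_left, real_inner_smul_left, real_inner_self_eq_norm_sq, he]
    ring
  have hw (x : E) : ⟪w, x⟫ = f x - ⟪y, e⟫ * ⟪x, e⟫ := by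
    rw [inner_sub_left, real_inner_smul_left, hy, real_inner_comm x e]
  have hwC : ∀ x ∈ C, ⟪w, x⟫ < ⟪w, q⟫ := fun x hx => by
    rw [hw, hw, hCe x hx]
    linarith [hfC x hx]
  have hw0 : w ≠ 0 := by
    rintro hw0
    obtain ⟨x, hx⟩ := hCne
    simpa [hw0] using hwC x hx
  refine ⟨‖w‖⁻¹ • w, norm_smul_inv_norm hw0, ?_, fun x hx => ?_⟩
  · rw [real_inner_smul_left, hwe, mul_zero]
  · rw [real_inner_smul_left, real_inner_smul_left]
    exact mul_lt_mul_of_pos_left (hwC x hx) (inv_pos.2 (norm_pos_iff.2 hw0))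

theorem IsCompact.exists_forall_lt_of_lowerSemicontinuousOn {α : Type*} [TopologicalSpace α]
    {K : Set α} {f : α → EReal} (hK : IsCompact K) (hf : LowerSemicontinuousOn f K)
    (hpos : ∀ x ∈ K, 0 < f x) : ∃ δ : ℝ, 0 < δ ∧ ∀ x ∈ K, (δ : EReal) < f x := by
  rcases K.eq_empty_or_nonempty with rfl | hne
  · exact ⟨1, one_pos, by simp⟩
  obtain ⟨a, ha, hmin⟩ := hf.exists_isMinOn hne hK
  obtain ⟨δ, hδ, hδa⟩ := EReal.lt_iff_exists_real_btwn.1 (hpos a ha)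
  exact ⟨δ, EReal.coe_pos.1 hδ, fun x hx => hδa.trans_le (hmin hx)⟩

namespace HasEnvelope

variable {Ω : Type*} [MeasurableSpace Ω] {μ : Measure Ω} {ℛ : L2 μ → EReal} {𝒬 : Set (L2 μ)}

lemma inner_le (henv : HasEnvelope μ ℛ 𝒬) {Q : L2 μ} (hQ : Q ∈ 𝒬) (X : L2 μ) :
    ((⟪X, Q⟫ : ℝ) : EReal) ≤ ℛ X := by
  rw [henv X, ← pairing_eq_inner]
  exact le_iSup₂_of_le Q hQ le_rfl

lemma le_of_forall_inner_le (henv : HasEnvelope μ ℛ 𝒬) {X : L2 μ} {r : ℝ}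
    (hr : ∀ Q ∈ 𝒬, ⟪X, Q⟫ ≤ r) : ℛ X ≤ r := by
  rw [henv X]
  exact iSup₂_le fun Q hQ => EReal.coe_le_coe_iff.2 (pairing_eq_inner X Q ▸ hr Q hQ)

lemma lowerSemicontinuous (henv : HasEnvelope μ ℛ 𝒬) : LowerSemicontinuous ℛ := by
  rw [funext henv]
  refine lowerSemicontinuous_biSup fun Q _ => Continuous.lowerSemicontinuous ?_
  simp_rw [pairing_eq_inner]
  exact continuous_coe_real_ereal.comp (continuous_id.inner continuous_const)

end HasEnvelope

namespace HasEnvelope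

variable {ℛ : L2 μ → EReal} {𝒬 : Set (L2 μ)}

lemma integral_lt_of_forall_mem_densities_near_one [Finite Ω] (henv : HasEnvelope μ ℛ 𝒬)
    {δ : ℝ} (hδ : 0 < δ) (hball : ∀ Q ∈ densities μ, ‖Q - constL2 μ 1‖ < δ → Q ∈ 𝒬)
    {X : L2 μ} (hX : ¬ ∃ c : ℝ, ⇑X =ᵐ[μ] fun _ => c) :
    ((∫ ω, X ω ∂μ : ℝ) : EReal) < ℛ X := by
  set e := constL2 μ 1
  set Y := X - (∫ ω, X ω ∂μ) • e
  have hY : Y ≠ 0 := sub_ne_zero.2 fun h => hX ((exists_ae_eq_const_iff X).2 h)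
  have hYe : ⟪Y, e⟫ = 0 := by
    rw [inner_sub_left, real_inner_smul_left, inner_constL2_one_self, inner_constL2_one]
    ring
  have hXY : ⟪X, Y⟫ = ‖Y‖ ^ 2 := by
    rw [← real_inner_self_eq_norm_sq, ← sub_eq_zero, ← inner_sub_left, sub_sub_cancel,
      real_inner_smul_left, real_inner_comm, hYe, mul_zero]
  have hnear : ∀ᶠ t in 𝓝 (0 : ℝ), e + t • Y ∈ Metric.ball e δ := by
    have : Continuous fun t : ℝ => e + t • Y := by fun_prop
    exact this.tendsto' 0 e (by simp) (Metric.ball_mem_nhds e hδ)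
  obtain ⟨t, ⟨hnear, hdens⟩, ht⟩ := ((hnear.and
    (eventually_constL2_one_add_smul_mem_densities hYe)).filter_mono nhdsWithin_le_nhds).and
    (self_mem_nhdsWithin : ∀ᶠ t in 𝓝[>] (0 : ℝ), 0 < t) |>.exists
  have hpair : ⟪X, e + t • Y⟫ = ∫ ω, X ω ∂μ + t * ‖Y‖ ^ 2 := by
    rw [inner_add_right, real_inner_smul_right, inner_constL2_one, hXY]
  calc ((∫ ω, X ω ∂μ : ℝ) : EReal)
      < ((⟪X, e + t • Y⟫ : ℝ) : EReal) := by
        rw [hpair, EReal.coe_lt_coe_iff]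
        have := mul_pos ht (pow_pos (norm_pos_iff.2 hY) 2)
        linarith
    _ ≤ ℛ X := henv.inner_le (hball _ hdens (by rwa [← dist_eq_norm])) X

lemma exists_forall_mem_densities_near_one [Finite Ω] (hatoms : ∀ ω : Ω, 0 < μ {ω})
    (hRE : IsRiskEnvelope μ 𝒬) (henv : HasEnvelope μ ℛ 𝒬)
    (haverse : ∀ X : L2 μ, (¬ ∃ c : ℝ, ⇑X =ᵐ[μ] fun _ => c) →
      ((∫ ω, X ω ∂μ : ℝ) : EReal) < ℛ X) :
    ∃ δ : ℝ, 0 < δ ∧ ∀ Q ∈ densities μ, ‖Q - constL2 μ 1‖ < δ → Q ∈ 𝒬 := by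
  have := finiteDimensional_L2 hatoms
  set e := constL2 μ 1
  set S := Metric.sphere (0 : L2 μ) 1 ∩ {Z | ⟪Z, e⟫ = 0}
  have hS : IsCompact S := (isCompact_sphere 0 1).inter_right
    (isClosed_eq (continuous_id.inner continuous_const) continuous_const)
  have hpos : ∀ Z ∈ S, 0 < ℛ Z := by
    rintro Z ⟨hZ1, hZe : ⟪Z, e⟫ = 0⟩
    have hZ : ¬ ∃ c : ℝ, ⇑Z =ᵐ[μ] fun _ => c := by
      rw [exists_ae_eq_const_iff, ← inner_constL2_one, hZe, zero_smul]
      rintro rfl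
      simp at hZ1
    have := haverse Z hZ
    rwa [← inner_constL2_one, hZe, EReal.coe_zero] at this
  obtain ⟨δ, hδ, hδS⟩ := hS.exists_forall_lt_of_lowerSemicontinuousOn
    (henv.lowerSemicontinuous.lowerSemicontinuousOn S) hpos
  refine ⟨δ, hδ, fun Q hQ hQδ => ?_⟩
  by_contra hQ𝒬
  have hQe := (mem_densities_iff.1 hQ).2
  obtain ⟨Z, hZ1, hZe, hsep⟩ := exists_unit_orthogonal_separating hRE.1 hRE.2.2.1 hRE.2.1
    norm_constL2_one (fun Q' hQ' => (mem_densities_iff.1 (hRE.2.2.2 hQ')).2.trans hQe.symm) hQ𝒬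
  have hZQ : ⟪Z, Q⟫ ≤ ‖Q - e‖ := by
    calc ⟪Z, Q⟫ = ⟪Z, Q - e⟫ := by rw [inner_sub_right, hZe, sub_zero]
      _ ≤ ‖Z‖ * ‖Q - e‖ := real_inner_le_norm Z (Q - e)
      _ = ‖Q - e‖ := by rw [hZ1, one_mul]
  have hRZ : ℛ Z ≤ ‖Q - e‖ :=
    henv.le_of_forall_inner_le fun Q' hQ' => (hsep Q' hQ').le.trans hZQ
  exact (hδS Z ⟨mem_sphere_zero_iff_norm.2 hZ1, hZe⟩).not_ge
    (hRZ.trans (EReal.coe_le_coe_iff.2 hQδ.le))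

end HasEnvelope

theorem stmt_14_general [Fintype Ω]
    (hatoms : ∀ ω : Ω, 0 < μ {ω})
    (ℛ : L2 μ → EReal) (𝒬 : Set (L2 μ))
    (hRE : IsRiskEnvelope μ 𝒬) (henv : HasEnvelope μ ℛ 𝒬) :
    (∀ X : L2 μ, (¬ ∃ c : ℝ, ⇑X =ᵐ[μ] fun _ => c) →
        ((∫ ω, X ω ∂μ : ℝ) : EReal) < ℛ X) ↔
      ∃ δ : ℝ, 0 < δ ∧ ∀ Q ∈ densities μ, ‖Q - constL2 μ 1‖ < δ → Q ∈ 𝒬 :=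
  ⟨henv.exists_forall_mem_densities_near_one hatoms hRE, fun ⟨_, hδ, hball⟩ _ hX =>
    henv.integral_lt_of_forall_mem_densities_near_one hδ hball hX⟩

/-- on a finite probability space where `Σ` is the power set and every atom
has positive probability, a coherent risk measure `ℛ` with risk envelope `𝒬` is averse if
and only if `1` is a relative interior point of `𝒬` relative to `𝒫`. -/
theorem stmt_14 [Fintype Ω]
    (hsigma : ∀ s : Set Ω, MeasurableSet s)
    (hatoms : ∀ ω : Ω, 0 < μ {ω})
    (ℛ : L2 μ → EReal) (𝒬 : Set (L2 μ))
    (hcoh : IsCoherent μ ℛ) (hRE : IsRiskEnvelope μ 𝒬) (henv : HasEnvelope μ ℛ 𝒬) :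
    (∀ X : L2 μ, (¬ ∃ c : ℝ, ⇑X =ᵐ[μ] fun _ => c) →
        ((∫ ω, X ω ∂μ : ℝ) : EReal) < ℛ X) ↔
      ∃ δ : ℝ, 0 < δ ∧ ∀ Q ∈ densities μ, ‖Q - constL2 μ 1‖ < δ → Q ∈ 𝒬 :=
  stmt_14_general hatoms ℛ 𝒬 hRE henv
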